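/- arXiv:2005.01471 — 2 statements merged into one kernel-verified Lean document; each statement's English description precedes it below -/
import Mathlib

section
/- Let 0 < m < 1 and a ∈ ℂ satisfy Assumption (A). Then there exists b ∈ ℂ with |b| = 1, Re(b) > 0 and Im(b) < 0 such that 2√m·Im(ab) > (1−m)·Re(ab) and Re(ab) ≥ 0. In particular, the product ab again satisfies Assumption (A). -/
/-!
Write `a = x + iy`, `k = 1 - m`, `c = 2√m`, and let `S` be the cone `0 ≤ Re z, k Re z < c Im z`.
It suffices to find `w` with `Re w > 0 > Im w` and `a w ∈ S`, then normalise `b = w / ‖w‖`,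
since `S` is invariant under positive scaling. If `x < 0`, take `w = i ā`, so that `a w = i |a|²`.
If `x ≥ 0`, rotate `a` clockwise a little: with `D = c y - k x > 0` and `E = c x + k y > 0`,
the functional `c Im - k Re` takes the value `D - tE` at `a (1 - it)`; `t = D / 2E` gives
`w = 2E - iD`.
-/

def sector (k c : ℝ) : Set ℂ := {z | 0 ≤ z.re ∧ k * z.re < c * z.im}

section

variable {k c : ℝ}

theorem ofReal_mul_mem_sector {z : ℂ} (hz : z ∈ sector k c) {r : ℝ} (hr : 0 < r) :
    (r : ℂ) * z ∈ sector k c := by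
  obtain ⟨hre, hlt⟩ := hz
  simp only [sector, Set.mem_ofPred_eq, Complex.re_ofReal_mul, Complex.im_ofReal_mul]
  constructor
  · positivity
  · nlinarith

theorem abs_re_le_of_mem_sector {z : ℂ} (hz : z ∈ sector k c) : k * |z.re| ≤ c * z.im := by
  rw [abs_of_nonneg hz.1]
  exact hz.2.le

theorem exists_norm_eq_one_mul_mem_sector {a w : ℂ} (hre : 0 < w.re) (him : w.im < 0)
    (haw : a * w ∈ sector k c) :
    ∃ b : ℂ, ‖b‖ = 1 ∧ 0 < b.re ∧ b.im < 0 ∧ a * b ∈ sector k c := by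
  have hw : 0 < ‖w‖ := norm_pos_iff.mpr fun h => by simp [h] at hre
  have hinv : 0 < ‖w‖⁻¹ := inv_pos.mpr hw
  refine ⟨(‖w‖⁻¹ : ℝ) * w, ?_, ?_, ?_, ?_⟩
  · rw [norm_mul, Complex.norm_real, Real.norm_of_nonneg hinv.le, inv_mul_cancel₀ hw.ne']
  · rw [Complex.re_ofReal_mul]
    positivity
  · rw [Complex.im_ofReal_mul]
    exact mul_neg_of_pos_of_neg hinv him
  · rw [mul_left_comm]
    exact ofReal_mul_mem_sector haw hinv

theorem exists_mul_mem_sector_of_re_nonneg (hk : 0 < k) (hc : 0 ≤ c) {a : ℂ} (hx : 0 ≤ a.re)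
    (hA : k * a.re < c * a.im) : ∃ w : ℂ, 0 < w.re ∧ w.im < 0 ∧ a * w ∈ sector k c := by
  set D := c * a.im - k * a.re
  set E := c * a.re + k * a.im
  have hD : 0 < D := by linarith
  have hy : 0 < a.im := by
    by_contra! hy
    nlinarith [mul_nonpos_of_nonneg_of_nonpos hc hy, mul_nonneg hk.le hx]
  have hE : 0 < E := by positivity
  refine ⟨⟨2 * E, -D⟩, by simpa using hE, by simpa using hD, ?_, ?_⟩
  · simp only [Complex.mul_re]
    nlinarith [mul_nonneg hE.le hx, mul_pos hD hy]
  · have key : c * (a * ⟨2 * E, -D⟩ : ℂ).im - k * (a * ⟨2 * E, -D⟩ : ℂ).re = E * D := by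
      simp only [Complex.mul_re, Complex.mul_im, D, E]
      ring
    nlinarith [mul_pos hE hD]

theorem exists_mul_mem_sector_of_re_neg (hk : 0 < k) (hc : 0 ≤ c) {a : ℂ} (hx : a.re < 0)
    (hA : k * |a.re| ≤ c * a.im) : ∃ w : ℂ, 0 < w.re ∧ w.im < 0 ∧ a * w ∈ sector k c := by
  have hcy : 0 < c * a.im := lt_of_lt_of_le (mul_pos hk (abs_pos.mpr hx.ne)) hA
  have hy : 0 < a.im := pos_of_mul_pos_right hcy hc
  have hc' : 0 < c := pos_of_mul_pos_left hcy hy.le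
  refine ⟨Complex.I * (starRingEnd ℂ) a, by simpa using hy, by simpa using hx, ?_⟩
  have haw : a * (Complex.I * (starRingEnd ℂ) a) = (Complex.normSq a : ℂ) * Complex.I := by
    rw [mul_left_comm, Complex.mul_conj, mul_comm]
  rw [haw, sector, Set.mem_ofPred_eq, Complex.re_ofReal_mul, Complex.im_ofReal_mul]
  simp only [Complex.I_re, Complex.I_im, mul_zero, mul_one, le_refl, true_and]
  exact mul_pos hc' (Complex.normSq_pos.mpr fun h => by simp [h] at hy)

end

theorem statement0_general (m : ℝ) (a : ℂ) (hm1 : m < 1)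
    (hA1 : (1 - m) * |a.re| ≤ 2 * Real.sqrt m * a.im)
    (hA2 : 0 ≤ a.re → (1 - m) * a.re < 2 * Real.sqrt m * a.im) :
    ∃ b : ℂ, ‖b‖ = 1 ∧ 0 < b.re ∧ b.im < 0 ∧
      (1 - m) * (a * b).re < 2 * Real.sqrt m * (a * b).im ∧
      0 ≤ (a * b).re ∧
      ((1 - m) * |(a * b).re| ≤ 2 * Real.sqrt m * (a * b).im ∧
        (0 ≤ (a * b).re → (1 - m) * (a * b).re < 2 * Real.sqrt m * (a * b).im)) := by
  have hk : 0 < 1 - m := by linarith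
  have hc : 0 ≤ 2 * Real.sqrt m := by positivity
  obtain ⟨w, hre, him, haw⟩ : ∃ w : ℂ, 0 < w.re ∧ w.im < 0 ∧ a * w ∈ sector (1 - m) (2 * √m) := by
    rcases le_or_gt 0 a.re with hx | hx
    · exact exists_mul_mem_sector_of_re_nonneg hk hc hx (hA2 hx)
    · exact exists_mul_mem_sector_of_re_neg hk hc hx hA1
  obtain ⟨b, hb, hbre, hbim, hab⟩ := exists_norm_eq_one_mul_mem_sector hre him haw
  exact ⟨b, hb, hbre, hbim, hab.2, hab.1, abs_re_le_of_mem_sector hab, fun _ => hab.2⟩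

/-- Under Assumption (A) on `m` and `a`, there exists `b ∈ ℂ` with
`|b| = 1`, `Re b > 0`, `Im b < 0`, such that `2√m · Im(ab) > (1−m) · Re(ab)` and
`Re(ab) ≥ 0`; in particular `ab` again satisfies Assumption (A). -/
theorem statement0 (m : ℝ) (a : ℂ) (hm0 : 0 < m) (hm1 : m < 1)
    (hA1 : (1 - m) * |a.re| ≤ 2 * Real.sqrt m * a.im)
    (hA2 : 0 ≤ a.re → (1 - m) * a.re < 2 * Real.sqrt m * a.im) :
    ∃ b : ℂ, ‖b‖ = 1 ∧ 0 < b.re ∧ b.im < 0 ∧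
      (1 - m) * (a * b).re < 2 * Real.sqrt m * (a * b).im ∧
      0 ≤ (a * b).re ∧
      ((1 - m) * |(a * b).re| ≤ 2 * Real.sqrt m * (a * b).im ∧
        (0 ≤ (a * b).re → (1 - m) * (a * b).re < 2 * Real.sqrt m * (a * b).im)) :=
  statement0_general m a hm1 hA1 hA2
end

section
/- Let 0 < m < 1 and 1 ≤ p < ∞. There exists a constant C > 0 depending only on m such that for all measurable u, v : ℝ^N → ℂ with ∫|u|^p dx < ∞ and ∫|v|^p dx < ∞, the functions g(u) and g(v) belong to L^{p/m}(ℝ^N;ℂ), ‖g(u)‖_{L^{p/m}} = ‖u‖_{L^p}^m, and ‖g(u) − g(v)‖_{L^{p/m}} ≤ C·‖u − v‖_{L^p}^m. In particular, u ↦ g(u) is continuous from L^p(ℝ^N;ℂ) to L^{p/m}(ℝ^N;ℂ) and maps bounded sets to bounded sets. -/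
open MeasureTheory Set Filter
open scoped ENNReal Topology

noncomputable section

/-- `g(z) = |z|^(m-1) · z` (so that `g(0) = 0`, since `0 ^ (m-1) = 0` for `m < 1`). -/
def gfun (m : ℝ) (z : ℂ) : ℂ := ((‖z‖ ^ (m - 1) : ℝ) : ℂ) * z

/-!
Pointwise, `g` is `m`-Hölder with constant `3`. Write `s = |b| ≤ t = |a|` and `d = |a - b|`.
If `s ≤ d` then `t ≤ 2d` and `|g(a) - g(b)| ≤ t^m + s^m ≤ 3 d^m`. If `d < s`, split
`g(a) - g(b) = t^(m-1) (a - b) + (t^(m-1) - s^(m-1)) b`; both terms are at most `s^(m-1) d ≤ d^m`.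
Since `|g(u)| = |u|^m`, the `L^(p/m)` norm of `|u - v|^m` is `‖u - v‖_p^m`, and integrating the
pointwise bound gives the estimate with `C = 3`.
-/

lemma Real.rpow_sub_one_mul_le_rpow {m s d : ℝ} (hm : m ≤ 1) (hd : 0 ≤ d) (hds : d ≤ s) :
    s ^ (m - 1) * d ≤ d ^ m := by
  rcases hd.eq_or_lt with rfl | hd
  · simpa using Real.rpow_nonneg le_rfl m
  calc s ^ (m - 1) * d ≤ d ^ (m - 1) * d :=
        mul_le_mul_of_nonneg_right (Real.rpow_le_rpow_of_nonpos hd hds (by linarith)) hd.le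
    _ = d ^ m := by rw [Real.rpow_sub_one hd.ne', div_mul_cancel₀ _ hd.ne']

lemma Real.rpow_sub_one_sub_rpow_sub_one_mul_le {m s t : ℝ} (hm : 0 ≤ m) (hs : 0 < s)
    (hst : s ≤ t) : (s ^ (m - 1) - t ^ (m - 1)) * s ≤ (t - s) * s ^ (m - 1) := by
  have ht : 0 < t := hs.trans_le hst
  have hratio : s / t ≤ (t / s) ^ (m - 1) := by
    rw [← inv_div, ← Real.rpow_neg_one]
    exact Real.rpow_le_rpow_of_exponent_le ((one_le_div hs).2 hst) (by linarith)
  have ht_eq : t ^ (m - 1) = (t / s) ^ (m - 1) * s ^ (m - 1) := by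
    rw [Real.div_rpow ht.le hs.le, div_mul_cancel₀ _ (Real.rpow_pos_of_pos hs _).ne']
  have hs_pow := Real.rpow_pos_of_pos hs (m - 1)
  rw [ht_eq]
  have hdivided : s - s * (t / s) ^ (m - 1) ≤ t - s := by
    have : s * (s / t) ≤ s * (t / s) ^ (m - 1) := mul_le_mul_of_nonneg_left hratio hs.le
    have : s * (s / t) + t ≥ 2 * s := by
      rw [mul_div_assoc', ge_iff_le, div_add' _ _ _ ht.ne', le_div_iff₀ ht]
      nlinarith [sq_nonneg (t - s)]
    linarith
  nlinarith

lemma norm_gfun {m : ℝ} (hm : m ≠ 0) (z : ℂ) : ‖gfun m z‖ = ‖z‖ ^ m := by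
  rcases eq_or_ne z 0 with rfl | hz
  · simp [gfun, Real.zero_rpow hm]
  · rw [gfun, norm_mul, Complex.norm_real, Real.norm_of_nonneg (by positivity),
      Real.rpow_sub_one (norm_ne_zero_iff.2 hz), div_mul_cancel₀ _ (norm_ne_zero_iff.2 hz)]

lemma gfun_sub_gfun (m : ℝ) (a b : ℂ) :
    gfun m a - gfun m b =
      ((‖a‖ ^ (m - 1) : ℝ) : ℂ) * (a - b) + ((‖a‖ ^ (m - 1) - ‖b‖ ^ (m - 1) : ℝ) : ℂ) * b := by
  simp only [gfun]; push_cast; ring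

lemma measurable_gfun (m : ℝ) : Measurable (gfun m) := by
  unfold gfun; fun_prop

lemma norm_gfun_sub_gfun_le_of_norm_le {m : ℝ} (hm0 : 0 < m) (hm1 : m < 1) {a b : ℂ}
    (hba : ‖b‖ ≤ ‖a‖) : ‖gfun m a - gfun m b‖ ≤ 3 * ‖a - b‖ ^ m := by
  set s := ‖b‖
  set t := ‖a‖
  set d := ‖a - b‖
  have hd : 0 ≤ d := norm_nonneg _
  have hts : t ≤ s + d := by simpa [s, t, d, add_comm] using norm_le_norm_add_norm_sub' a b
  rcases le_or_gt s d with hsd | hds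
  · have hsm : s ^ m ≤ d ^ m := Real.rpow_le_rpow (norm_nonneg b) hsd hm0.le
    have htm : t ^ m ≤ 2 * d ^ m :=
      calc t ^ m ≤ (2 * d) ^ m := Real.rpow_le_rpow (norm_nonneg a) (by linarith) hm0.le
        _ = 2 ^ m * d ^ m := Real.mul_rpow zero_le_two hd
        _ ≤ 2 * d ^ m := by
          gcongr
          simpa using Real.rpow_le_rpow_of_exponent_le one_le_two hm1.le
    calc ‖gfun m a - gfun m b‖ ≤ ‖gfun m a‖ + ‖gfun m b‖ := norm_sub_le _ _
      _ = t ^ m + s ^ m := by rw [norm_gfun hm0.ne', norm_gfun hm0.ne']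
      _ ≤ 3 * d ^ m := by linarith
  · have hs : 0 < s := hd.trans_lt hds
    have hts_pow : t ^ (m - 1) ≤ s ^ (m - 1) := Real.rpow_le_rpow_of_nonpos hs hba (by linarith)
    have hsd_pow : s ^ (m - 1) * d ≤ d ^ m := Real.rpow_sub_one_mul_le_rpow hm1.le hd hds.le
    have hsub : (s ^ (m - 1) - t ^ (m - 1)) * s ≤ (t - s) * s ^ (m - 1) :=
      Real.rpow_sub_one_sub_rpow_sub_one_mul_le hm0.le hs hba
    have hsplit : ‖gfun m a - gfun m b‖ ≤ t ^ (m - 1) * d + (s ^ (m - 1) - t ^ (m - 1)) * s := by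
      rw [gfun_sub_gfun]
      refine (norm_add_le _ _).trans_eq ?_
      rw [norm_mul, norm_mul, Complex.norm_real, Complex.norm_real,
        Real.norm_of_nonneg (by positivity), Real.norm_of_nonpos (by linarith), neg_sub]
    calc ‖gfun m a - gfun m b‖ ≤ t ^ (m - 1) * d + (s ^ (m - 1) - t ^ (m - 1)) * s := hsplit
      _ ≤ s ^ (m - 1) * d + (t - s) * s ^ (m - 1) :=
          add_le_add (mul_le_mul_of_nonneg_right hts_pow hd) hsub
      _ ≤ s ^ (m - 1) * d + d * s ^ (m - 1) := by gcongr; linarith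
      _ ≤ 3 * d ^ m := by linarith [mul_comm d (s ^ (m - 1)), Real.rpow_nonneg hd m]

lemma norm_gfun_sub_gfun_le {m : ℝ} (hm0 : 0 < m) (hm1 : m < 1) (a b : ℂ) :
    ‖gfun m a - gfun m b‖ ≤ 3 * ‖a - b‖ ^ m := by
  rcases le_total ‖b‖ ‖a‖ with h | h
  · exact norm_gfun_sub_gfun_le_of_norm_le hm0 hm1 h
  · rw [norm_sub_rev, norm_sub_rev a]
    exact norm_gfun_sub_gfun_le_of_norm_le hm0 hm1 h

section Lebesgue

variable {α : Type*} [MeasurableSpace α] {μ : Measure α} {m : ℝ}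

lemma eLpNorm_gfun_comp (hm : 0 < m) (w : α → ℂ) (p : ℝ≥0∞) :
    eLpNorm (fun x => gfun m (w x)) (p / ENNReal.ofReal m) μ = eLpNorm w p μ ^ m := by
  have hm' : ENNReal.ofReal m ≠ 0 := by simpa using hm
  rw [eLpNorm_congr_norm_ae (g := fun x => ‖w x‖ ^ m) (Eventually.of_forall fun x => by
      rw [norm_gfun hm.ne', Real.norm_of_nonneg (by positivity)]),
    eLpNorm_norm_rpow w hm, ENNReal.div_mul_cancel hm' ENNReal.ofReal_ne_top]

lemma memLp_gfun_comp (hm : 0 < m) {w : α → ℂ} {p : ℝ≥0∞} (hw : MemLp w p μ) :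
    MemLp (fun x => gfun m (w x)) (p / ENNReal.ofReal m) μ :=
  ⟨((measurable_gfun m).comp_aemeasurable hw.1.aemeasurable).aestronglyMeasurable, by
    rw [eLpNorm_gfun_comp hm]
    exact ENNReal.rpow_lt_top_of_nonneg hm.le hw.2.ne⟩

lemma eLpNorm_gfun_comp_sub_le (hm0 : 0 < m) (hm1 : m < 1) (u v : α → ℂ) (p : ℝ≥0∞) :
    eLpNorm (fun x => gfun m (u x) - gfun m (v x)) (p / ENNReal.ofReal m) μ
      ≤ 3 * eLpNorm (fun x => u x - v x) p μ ^ m :=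
  calc eLpNorm (fun x => gfun m (u x) - gfun m (v x)) (p / ENNReal.ofReal m) μ
      ≤ ENNReal.ofReal 3 * eLpNorm (fun x => ‖u x - v x‖ ^ m) (p / ENNReal.ofReal m) μ :=
        eLpNorm_le_mul_eLpNorm_of_ae_le_mul (Eventually.of_forall fun x => by
          rw [Real.norm_of_nonneg (by positivity)]
          exact norm_gfun_sub_gfun_le hm0 hm1 (u x) (v x)) _
    _ = 3 * eLpNorm (fun x => u x - v x) p μ ^ m := by
        rw [eLpNorm_norm_rpow _ hm0, ENNReal.div_mul_cancel (by simpa using hm0)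
          ENNReal.ofReal_ne_top, ENNReal.ofReal_ofNat]

end Lebesgue

/-- For `0 < m < 1` there is a constant `C > 0` depending only on `m`
such that for every `N ≥ 1`, every `1 ≤ p < ∞` and all `u, v ∈ L^p(ℝ^N; ℂ)`:
`g(u) ∈ L^(p/m)`, `‖g(u)‖_(p/m) = ‖u‖_p ^ m`, and
`‖g(u) − g(v)‖_(p/m) ≤ C · ‖u − v‖_p ^ m`.  In particular `u ↦ g(u)` is continuous
from `L^p` to `L^(p/m)` and maps bounded sets to bounded sets. -/
theorem statement1 (m : ℝ) (hm0 : 0 < m) (hm1 : m < 1) :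
    ∃ C : ℝ, 0 < C ∧ ∀ (N : ℕ), 1 ≤ N → ∀ p : ℝ, 1 ≤ p →
      ∀ u v : (Fin N → ℝ) → ℂ,
        MemLp u (ENNReal.ofReal p) volume → MemLp v (ENNReal.ofReal p) volume →
        MemLp (fun x => gfun m (u x)) (ENNReal.ofReal (p / m)) volume ∧
        MemLp (fun x => gfun m (v x)) (ENNReal.ofReal (p / m)) volume ∧
        (eLpNorm (fun x => gfun m (u x)) (ENNReal.ofReal (p / m)) volume).toReal
          = (eLpNorm u (ENNReal.ofReal p) volume).toReal ^ m ∧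
        (eLpNorm (fun x => gfun m (u x) - gfun m (v x)) (ENNReal.ofReal (p / m)) volume).toReal
          ≤ C * (eLpNorm (fun x => u x - v x) (ENNReal.ofReal p) volume).toReal ^ m := by
  refine ⟨3, three_pos, fun N _ p _ u v hu hv => ?_⟩
  rw [ENNReal.ofReal_div_of_pos hm0]
  have hdiff_fin : eLpNorm (fun x => u x - v x) (ENNReal.ofReal p) volume ≠ ⊤ := (hu.sub hv).2.ne
  refine ⟨memLp_gfun_comp hm0 hu, memLp_gfun_comp hm0 hv, ?_, ?_⟩
  · rw [eLpNorm_gfun_comp hm0, ENNReal.toReal_rpow]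
  · have h := ENNReal.toReal_mono (by finiteness) (eLpNorm_gfun_comp_sub_le hm0 hm1 u v _)
    rwa [ENNReal.toReal_mul, ← ENNReal.toReal_rpow] at h
end
end
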